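/- Let (G,Λ) be a pseudo free self-similar k-graph such that g·v = v for all g ∈ G and v ∈ Λ^0, and let T be a maximal tail of Λ. If every cycline triple of (G, ΛT) is a cycline pair of (G, ΛT), then Per_{G, H_T ΛT} = Per_{H_T ΛT} = Per_{G, ΛT} = Per_{ΛT}, and this common set is a subgroup of ℤ^k. -/

import Mathlib

/-- A `k`-graph: a countable small category equipped with a degree functor
`d : Λ → ℕ^k` satisfying the unique factorization property.  Objects are
identified with their identity morphisms (the degree-zero paths);
`comp μ ν` is the composite `μν` (a junk value when `s μ ≠ r ν`). -/
structure KGraph (k : ℕ) where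
  Path : Type
  countable : Countable Path
  r : Path → Path
  s : Path → Path
  d : Path → Fin k → ℕ
  comp : Path → Path → Path
  d_r : ∀ μ, d (r μ) = 0
  d_s : ∀ μ, d (s μ) = 0
  r_r : ∀ μ, r (r μ) = r μ
  s_r : ∀ μ, s (r μ) = r μ
  r_s : ∀ μ, r (s μ) = s μ
  s_s : ∀ μ, s (s μ) = s μ
  eq_r_of_d_eq_zero : ∀ μ, d μ = 0 → μ = r μ
  comp_id : ∀ μ, comp μ (s μ) = μ
  id_comp : ∀ μ, comp (r μ) μ = μ
  r_comp : ∀ μ ν, s μ = r ν → r (comp μ ν) = r μ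
  s_comp : ∀ μ ν, s μ = r ν → s (comp μ ν) = s ν
  d_comp : ∀ μ ν, s μ = r ν → d (comp μ ν) = d μ + d ν
  comp_assoc : ∀ μ ν ξ, s μ = r ν → s ν = r ξ →
    comp (comp μ ν) ξ = comp μ (comp ν ξ)
  factor : ∀ μ p q, d μ = p + q →
    ∃! αβ : Path × Path, s αβ.1 = r αβ.2 ∧ d αβ.1 = p ∧ d αβ.2 = q ∧
      comp αβ.1 αβ.2 = μ

namespace KGraph

variable {k : ℕ} (Λ : KGraph k)

/-- The vertices of a `k`-graph are the degree-zero paths. -/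
def IsVertex (v : Λ.Path) : Prop := Λ.d v = 0

/-- `Λ` is row-finite if `|v Λ^p| < ∞` for every vertex `v` and `p ∈ ℕ^k`. -/
def RowFinite : Prop :=
  ∀ v, Λ.IsVertex v → ∀ p : Fin k → ℕ, {μ | Λ.r μ = v ∧ Λ.d μ = p}.Finite

/-- `Λ` is source-free if `v Λ^p ≠ ∅` for every vertex `v` and `p ∈ ℕ^k`. -/
def SourceFree : Prop :=
  ∀ v, Λ.IsVertex v → ∀ p : Fin k → ℕ, ∃ μ, Λ.r μ = v ∧ Λ.d μ = p

/-- `ΛT`, the set of paths of `Λ` whose source lies in `T`. -/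
def tailPaths (T : Set Λ.Path) : Set Λ.Path := {μ | Λ.s μ ∈ T}

/-- `H Λ T`, the set of paths with source in `T` and range in `H`. -/
def cornerPaths (T H : Set Λ.Path) : Set Λ.Path := {μ | Λ.s μ ∈ T ∧ Λ.r μ ∈ H}

end KGraph

/-- A maximal tail of a `k`-graph. -/
structure MaximalTail {k : ℕ} (Λ : KGraph k) (T : Set Λ.Path) : Prop where
  nonempty : T.Nonempty
  vertex : ∀ v ∈ T, Λ.IsVertex v
  backward_closed : ∀ w, Λ.IsVertex w → ∀ v ∈ T, (∃ μ, Λ.r μ = w ∧ Λ.s μ = v) → w ∈ T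
  reaches : ∀ v ∈ T, ∀ p : Fin k → ℕ, ∃ μ, Λ.r μ = v ∧ Λ.d μ = p ∧ Λ.s μ ∈ T
  directed : ∀ v₁ ∈ T, ∀ v₂ ∈ T, ∃ w ∈ T,
    (∃ μ, Λ.r μ = v₁ ∧ Λ.s μ = w) ∧ (∃ ν, Λ.r ν = v₂ ∧ Λ.s ν = w)

/-- An infinite path of a `k`-graph, i.e. a degree-preserving functor
`x : Ω_k → Λ`; here `val p n` records the segment `x(p, p + n)`. -/
structure InfPath {k : ℕ} (Λ : KGraph k) where
  val : (Fin k → ℕ) → (Fin k → ℕ) → Λ.Path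
  d_val : ∀ p n, Λ.d (val p n) = n
  r_val : ∀ p n, Λ.r (val p n) = val p 0
  s_val : ∀ p n, Λ.s (val p n) = val (p + n) 0
  comp_val : ∀ p m n, Λ.comp (val p m) (val (p + m) n) = val p (m + n)

namespace InfPath

variable {k : ℕ} {Λ : KGraph k}

/-- The shift `σ^n x` of an infinite path. -/
def shift (x : InfPath Λ) (n : Fin k → ℕ) : InfPath Λ where
  val p m := x.val (p + n) m
  d_val p m := x.d_val _ _
  r_val p m := x.r_val _ _
  s_val p m := by rw [x.s_val, add_right_comm]
  comp_val p m m' := by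
    show Λ.comp (x.val (p + n) m) (x.val (p + m + n) m') = x.val (p + n) (m + m')
    rw [add_right_comm p m n]; exact x.comp_val (p + n) m m'

/-- An infinite path lies in the subgraph determined by the set of paths `P`
if all of its segments lie in `P`. -/
def inSub (P : Set Λ.Path) (x : InfPath Λ) : Prop := ∀ p n, x.val p n ∈ P

end InfPath

/-- `z = μ x`: `z` is the infinite path obtained by prepending the finite
path `μ` to the infinite path `x` (which requires `s μ = x(0,0)`). -/
def KGraph.IsExtension {k : ℕ} (Λ : KGraph k) (μ : Λ.Path) (x z : InfPath Λ) : Prop :=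
  Λ.s μ = x.val 0 0 ∧ ∀ n, z.val 0 (Λ.d μ + n) = Λ.comp μ (x.val 0 n)

/-- A cycline pair `(μ, 1, ν)` of the subgraph of `Λ` determined by the set of
paths `P`: `s μ = s ν` and `μ x = ν x` for every infinite path `x` of the
subgraph with range `s ν`. -/
def KGraph.IsCyclinePair {k : ℕ} (Λ : KGraph k) (P : Set Λ.Path) (μ ν : Λ.Path) : Prop :=
  μ ∈ P ∧ ν ∈ P ∧ Λ.s μ = Λ.s ν ∧
    ∀ x : InfPath Λ, x.inSub P →
      ∀ z : InfPath Λ, Λ.IsExtension ν x z → Λ.IsExtension μ x z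

/-- `Per_Γ` for the subgraph `Γ` of `Λ` determined by `P`:
the set of all `d μ − d ν` over cycline pairs `(μ, 1, ν)`. -/
def KGraph.PerPair {k : ℕ} (Λ : KGraph k) (P : Set Λ.Path) : Set (Fin k → ℤ) :=
  {m | ∃ μ ν, Λ.IsCyclinePair P μ ν ∧ m = fun i => (Λ.d μ i : ℤ) - (Λ.d ν i : ℤ)}

/-- A self-similar `k`-graph `(G, Λ)`: an action of the countable discrete
group `G` on `Λ` together with a restriction map `(g, μ) ↦ g|_μ`. -/
structure SelfSimilarSys (k : ℕ) (G : Type) [Group G] [Countable G] (Λ : KGraph k) where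
  act : G → Λ.Path → Λ.Path
  res : G → Λ.Path → G
  act_one : ∀ μ, act 1 μ = μ
  act_mul : ∀ g h μ, act (g * h) μ = act g (act h μ)
  d_act : ∀ g μ, Λ.d (act g μ) = Λ.d μ
  s_act : ∀ g μ, Λ.s (act g μ) = act g (Λ.s μ)
  r_act : ∀ g μ, Λ.r (act g μ) = act g (Λ.r μ)
  act_comp : ∀ g μ ν, Λ.s μ = Λ.r ν →
    act g (Λ.comp μ ν) = Λ.comp (act g μ) (act (res g μ) ν)
  res_vertex : ∀ g v, Λ.IsVertex v → res g v = g
  res_comp : ∀ g μ ν, Λ.s μ = Λ.r ν → res g (Λ.comp μ ν) = res (res g μ) ν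
  res_one : ∀ μ, res 1 μ = 1
  res_mul : ∀ g h μ, res (g * h) μ = res g (act h μ) * res h μ

namespace SelfSimilarSys

variable {k : ℕ} {G : Type} [Group G] [Countable G] {Λ : KGraph k}

/-- `(G, Λ)` is pseudo free: `g·μ = μ` and `g|_μ = 1` imply `g = 1`. -/
def PseudoFree (S : SelfSimilarSys k G Λ) : Prop :=
  ∀ g μ, S.act g μ = μ → S.res g μ = 1 → g = 1

/-- `y = g · x` for infinite paths: `y(0, n) = g · x(0, n)` for all `n`. -/
def IsGAct (S : SelfSimilarSys k G Λ) (g : G) (x y : InfPath Λ) : Prop :=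
  ∀ n, y.val 0 n = S.act g (x.val 0 n)

/-- A cycline triple `(μ, g, ν)` of the subgraph of `Λ` determined by `P`:
`s μ = g · s ν` and `μ (g · x) = ν x` for every infinite path `x` of the
subgraph with range `s ν`. -/
def IsCyclineTriple (S : SelfSimilarSys k G Λ) (P : Set Λ.Path)
    (μ : Λ.Path) (g : G) (ν : Λ.Path) : Prop :=
  μ ∈ P ∧ ν ∈ P ∧ Λ.s μ = S.act g (Λ.s ν) ∧
    ∀ x : InfPath Λ, x.inSub P → Λ.s ν = x.val 0 0 →
      ∀ y : InfPath Λ, S.IsGAct g x y →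
        ∀ z : InfPath Λ, Λ.IsExtension ν x z → Λ.IsExtension μ y z

/-- `Per_{G,Γ}` for the subgraph `Γ` of `Λ` determined by `P`:
the set of all `d μ − d ν` over cycline triples `(μ, g, ν)`. -/
def PerTriple (S : SelfSimilarSys k G Λ) (P : Set Λ.Path) : Set (Fin k → ℤ) :=
  {m | ∃ μ g ν, S.IsCyclineTriple P μ g ν ∧ m = fun i => (Λ.d μ i : ℤ) - (Λ.d ν i : ℤ)}

/-- Membership `y ∈ [x]`: `y` is an infinite path of `ΛT` and
`σ^p x = g · σ^q y` for some `p, q ∈ ℕ^k` and `g ∈ G`. -/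
def ClassMem (S : SelfSimilarSys k G Λ) (T : Set Λ.Path) (x y : InfPath Λ) : Prop :=
  y.inSub (Λ.tailPaths T) ∧ ∃ p q : Fin k → ℕ, ∃ g : G, S.IsGAct g (y.shift q) (x.shift p)

end SelfSimilarSys

/-- `H_T`: the vertices `v ∈ T` such that for all `p, q ∈ ℕ^k` with
`p − q ∈ Per_{ΛT}` and every `μ ∈ v Λ^p T` there is a unique `ν ∈ v Λ^q T`
with `(μ, 1, ν)` a cycline pair of `ΛT`. -/
def KGraph.HSet {k : ℕ} (Λ : KGraph k) (T : Set Λ.Path) : Set Λ.Path :=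
  {v | v ∈ T ∧ ∀ p q : Fin k → ℕ,
    (fun i => (p i : ℤ) - (q i : ℤ)) ∈ Λ.PerPair (Λ.tailPaths T) →
      ∀ μ, Λ.r μ = v → Λ.d μ = p → Λ.s μ ∈ T →
        ∃! ν, Λ.r ν = v ∧ Λ.d ν = q ∧ Λ.IsCyclinePair (Λ.tailPaths T) μ ν}

/-!
Cycline triples of `ΛT` have trivial group element, so every `Per_{G, ·}` below equals the
corresponding `Per_·`. The pair periods of `ΛT` form a group: by directedness of `T`
realisations of finitely many periods can be pushed to a common vertex, and a cycline pair
`(F, G)` with source `r α` turns `α` into a cycline partner `β` of degree `d α - (d F - d G)`,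
read off from the factorisation `G α = F β`. By Dickson's lemma the nonzero periods have
finitely many minimal elements in the orthant order; a vertex `v` at which all of them are
realised lies in `H_T`, since every period is peeled off by minimal ones. As `H_T` is
hereditary, infinite paths of `ΛT` starting in `H_T` stay in `H_T ΛT`, so the cycline pairs of
`H_T ΛT` are those of `ΛT` with range in `H_T`, and the paths from `v` realise every period.
-/

theorem WellQuasiOrdered.exists_finite_subset_forall_exists_rel {α : Type*}
    {r : α → α → Prop} [IsPartialOrder α r] (hr : WellQuasiOrdered r) (A : Set α) :
    ∃ B ⊆ A, B.Finite ∧ ∀ a ∈ A, ∃ b ∈ B, r b a := by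
  let B := {b ∈ A | ∀ a ∈ A, r a b → a = b}
  have hB : IsAntichain r B := fun b hb c hc hbc hr' => hbc (hc.2 b hb.1 hr')
  refine ⟨B, fun b hb => hb.1, hB.finite_of_wellQuasiOrdered hr, fun a ha => ?_⟩
  obtain ⟨b, ⟨hbA, hba⟩, hmin⟩ := hr.wellFounded.has_min {b | b ∈ A ∧ r b a} ⟨a, ha, refl a⟩
  refine ⟨b, ⟨hbA, fun c hc hcb => ?_⟩, hba⟩
  by_contra hne
  exact hmin c ⟨hc, _root_.trans hcb hba⟩ ⟨hcb, fun hbc => hne (antisymm hcb hbc)⟩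

section Orthant

variable {ι : Type*}

def OrthantLE (x y : ι → ℤ) : Prop := ∀ i, x i ∈ Set.uIcc 0 (y i)

instance : IsPartialOrder (ι → ℤ) OrthantLE where
  refl x i := Set.right_mem_uIcc
  trans x y z hxy hyz i := Set.uIcc_subset_uIcc Set.left_mem_uIcc (hyz i) (hxy i)
  antisymm x y hxy hyx := funext fun i => by
    have := hxy i; have := hyx i; rw [Set.mem_uIcc] at *; omega

theorem wellQuasiOrdered_orthantLE [Finite ι] : WellQuasiOrdered (OrthantLE (ι := ι)) := by
  intro f
  obtain ⟨m, n, hmn, hsign, habs⟩ := (Finite.wellQuasiOrdered (α := ι → Bool) (· = ·)).prod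
    wellQuasiOrdered_le fun n => (fun i => decide (0 ≤ f n i), fun i => (f n i).natAbs)
  refine ⟨m, n, hmn, fun i => ?_⟩
  have hs := congrFun hsign i
  have ha := habs i
  simp only [decide_eq_decide] at hs ha
  rw [Set.mem_uIcc]
  omega

theorem OrthantLE.sub {s m : ι → ℤ} (h : OrthantLE s m) : OrthantLE (m - s) m := fun i => by
  have := h i
  rw [Set.mem_uIcc] at *
  simp only [Pi.sub_apply]
  omega

end Orthant

namespace KGraph

variable {k : ℕ} {Λ : KGraph k}

theorem r_eq_self_of_d_eq_zero {v : Λ.Path} (h : Λ.d v = 0) : Λ.r v = v :=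
  (Λ.eq_r_of_d_eq_zero v h).symm

theorem s_eq_self_of_d_eq_zero {v : Λ.Path} (h : Λ.d v = 0) : Λ.s v = v := by
  rw [Λ.eq_r_of_d_eq_zero v h, Λ.s_r]

theorem eq_and_eq_of_comp_eq {a b a' b' : Λ.Path} (hab : Λ.s a = Λ.r b)
    (hab' : Λ.s a' = Λ.r b') (hd : Λ.d a = Λ.d a') (h : Λ.comp a b = Λ.comp a' b') :
    a = a' ∧ b = b' := by
  have hdb : Λ.d b = Λ.d b' := by
    have := Λ.d_comp a' b' hab'
    rw [← h, Λ.d_comp a b hab, hd] at this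
    exact add_left_cancel this
  exact Prod.ext_iff.mp <| (Λ.factor _ _ _ (Λ.d_comp a b hab)).unique (y₁ := (a, b))
    (y₂ := (a', b')) ⟨hab, rfl, rfl, rfl⟩ ⟨hab', hd.symm, hdb.symm, h.symm⟩

theorem comp_left_cancel {a b b' : Λ.Path} (hb : Λ.s a = Λ.r b) (hb' : Λ.s a = Λ.r b')
    (h : Λ.comp a b = Λ.comp a b') : b = b' :=
  (eq_and_eq_of_comp_eq hb hb' rfl h).2

variable (Λ) in
def IsPrefix (P W : Λ.Path) : Prop := ∃ R, Λ.s P = Λ.r R ∧ Λ.comp P R = W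

theorem isPrefix_comp {a b : Λ.Path} (h : Λ.s a = Λ.r b) : Λ.IsPrefix a (Λ.comp a b) :=
  ⟨b, h, rfl⟩

theorem isPrefix_refl (W : Λ.Path) : Λ.IsPrefix W W :=
  ⟨Λ.s W, (Λ.r_s W).symm, Λ.comp_id W⟩

theorem IsPrefix.trans {P Q W : Λ.Path} (hPQ : Λ.IsPrefix P Q) (hQW : Λ.IsPrefix Q W) :
    Λ.IsPrefix P W := by
  obtain ⟨R, hPR, rfl⟩ := hPQ
  obtain ⟨R', hQR', rfl⟩ := hQW
  rw [Λ.s_comp _ _ hPR] at hQR'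
  exact ⟨Λ.comp R R', by rw [Λ.r_comp _ _ hQR']; exact hPR, (Λ.comp_assoc _ _ _ hPR hQR').symm⟩

theorem IsPrefix.comp_left {P W : Λ.Path} (h : Λ.IsPrefix P W) {a : Λ.Path}
    (ha : Λ.s a = Λ.r P) : Λ.IsPrefix (Λ.comp a P) (Λ.comp a W) := by
  obtain ⟨R, hPR, rfl⟩ := h
  exact ⟨R, by rw [Λ.s_comp _ _ ha]; exact hPR, Λ.comp_assoc _ _ _ ha hPR⟩

theorem IsPrefix.r_eq {P W : Λ.Path} (h : Λ.IsPrefix P W) : Λ.r P = Λ.r W := by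
  obtain ⟨R, hPR, rfl⟩ := h
  rw [Λ.r_comp _ _ hPR]

theorem IsPrefix.d_le {P W : Λ.Path} (h : Λ.IsPrefix P W) : Λ.d P ≤ Λ.d W := by
  obtain ⟨R, hPR, rfl⟩ := h
  rw [Λ.d_comp _ _ hPR]
  exact le_self_add

theorem IsPrefix.eq_of_d_eq {P P' W : Λ.Path} (h : Λ.IsPrefix P W) (h' : Λ.IsPrefix P' W)
    (hd : Λ.d P = Λ.d P') : P = P' := by
  obtain ⟨R, hPR, rfl⟩ := h
  obtain ⟨R', hPR', hW⟩ := h'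
  exact (eq_and_eq_of_comp_eq hPR hPR' hd hW.symm).1

theorem exists_isPrefix {W : Λ.Path} {n : Fin k → ℕ} (hn : n ≤ Λ.d W) :
    ∃ P, Λ.IsPrefix P W ∧ Λ.d P = n := by
  obtain ⟨⟨P, R⟩, ⟨hPR, hdP, -, hW⟩, -⟩ := Λ.factor W n (Λ.d W - n)
    (add_tsub_cancel_of_le hn).symm
  exact ⟨P, ⟨R, hPR, hW⟩, hdP⟩

theorem IsPrefix.isPrefix_of_d_le {P Q W : Λ.Path} (hP : Λ.IsPrefix P W) (hQ : Λ.IsPrefix Q W)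
    (hd : Λ.d P ≤ Λ.d Q) : Λ.IsPrefix P Q := by
  obtain ⟨P', hP'Q, hdP'⟩ := exists_isPrefix hd
  rwa [← hP.eq_of_d_eq (hP'Q.trans hQ) hdP'.symm] at hP'Q

end KGraph

namespace InfPath

open KGraph

variable {k : ℕ} {Λ : KGraph k}

theorem ext {x y : InfPath Λ} (h : ∀ p n, x.val p n = y.val p n) : x = y := by
  cases x; cases y
  congr
  funext p n
  exact h p n

theorem isPrefix_val_zero (x : InfPath Λ) (m n : Fin k → ℕ) :
    Λ.IsPrefix (x.val 0 m) (x.val 0 (m + n)) :=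
  ⟨x.val (0 + m) n, by rw [x.s_val, x.r_val], x.comp_val 0 m n⟩

theorem val_zero_d_of_isPrefix (x : InfPath Λ) {P : Λ.Path} {m : Fin k → ℕ}
    (h : Λ.IsPrefix P (x.val 0 m)) : x.val 0 (Λ.d P) = P := by
  have hle : Λ.d P ≤ m := x.d_val 0 m ▸ h.d_le
  have hx : Λ.IsPrefix (x.val 0 (Λ.d P)) (x.val 0 m) := by
    simpa only [add_tsub_cancel_of_le hle] using x.isPrefix_val_zero (Λ.d P) (m - Λ.d P)
  exact hx.eq_of_d_eq h (x.d_val 0 _)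

theorem eq_of_val_zero_add {x y : InfPath Λ} (c : Fin k → ℕ)
    (h : ∀ n, x.val 0 (c + n) = y.val 0 (c + n)) : x = y := by
  have hzero : ∀ n, x.val 0 n = y.val 0 n := fun n => by
    have hy : Λ.IsPrefix (y.val 0 n) (x.val 0 (c + n)) := by
      rw [h, add_comm]; exact y.isPrefix_val_zero n c
    simpa only [y.d_val] using x.val_zero_d_of_isPrefix hy
  refine ext fun p n => ?_
  have hx := x.comp_val 0 p n
  have hy := y.comp_val 0 p n
  rw [zero_add] at hx hy
  rw [← hzero p, ← hzero (p + n), ← hx] at hy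
  have hsr : ∀ z : InfPath Λ, Λ.s (z.val 0 p) = Λ.r (z.val p n) := fun z => by
    rw [z.s_val, z.r_val, zero_add]
  exact comp_left_cancel (hsr x) (hzero p ▸ hsr y) hy.symm

/-- The segment `x(p, p + n)` is read off as the cofactor of `y p` in `y (p + n)`. -/
theorem exists_val_zero_eq {y : (Fin k → ℕ) → Λ.Path} (hd : ∀ n, Λ.d (y n) = n)
    (hy : ∀ m n, Λ.IsPrefix (y m) (y (m + n))) : ∃ x : InfPath Λ, ∀ n, x.val 0 n = y n := by
  choose R hsR hR using hy
  have hdR : ∀ m n, Λ.d (R m n) = n := fun m n => by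
    have := Λ.d_comp _ _ (hsR m n)
    rw [hR, hd, hd] at this
    exact (add_left_cancel this).symm
  have hsR' : ∀ m n, Λ.s (R m n) = Λ.s (y (m + n)) := fun m n => by
    rw [← hR, Λ.s_comp _ _ (hsR m n)]
  have hR0 : ∀ m, R m 0 = Λ.s (y m) := fun m =>
    comp_left_cancel (hsR m 0) (Λ.r_s _).symm (by rw [hR, add_zero, Λ.comp_id])
  refine ⟨⟨R, hdR, fun p n => by rw [hR0, hsR], fun p n => by rw [hR0, hsR'], ?_⟩, fun n => ?_⟩
  · intro p m n
    have hsr : Λ.s (R p m) = Λ.r (R (p + m) n) := by rw [hsR', hsR]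
    refine comp_left_cancel (a := y p) (by rw [Λ.r_comp _ _ hsr]; exact hsR p m)
      (hsR p (m + n)) ?_
    rw [← Λ.comp_assoc _ _ _ (hsR p m) hsr, hR, hR, hR, add_assoc]
  · have hy0 : y 0 = Λ.r (R 0 n) := by
      rw [← hsR, s_eq_self_of_d_eq_zero (hd 0)]
    have := hR 0 n
    rwa [hy0, Λ.id_comp, zero_add] at this

theorem exists_forall_isPrefix {w : (Fin k → ℕ) → Λ.Path} (hd : ∀ n, n ≤ Λ.d (w n))
    (hw : ∀ m n, Λ.IsPrefix (w m) (w (m + n))) :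
    ∃ x : InfPath Λ, ∀ n, Λ.IsPrefix (x.val 0 n) (w n) := by
  choose y hy hdy using fun n => exists_isPrefix (hd n)
  obtain ⟨x, hx⟩ := exists_val_zero_eq hdy fun m n =>
    ((hy m).trans (hw m n)).isPrefix_of_d_le (hy (m + n)) (by rw [hdy, hdy]; exact le_self_add)
  exact ⟨x, fun n => hx n ▸ hy n⟩

end InfPath

namespace KGraph

variable {k : ℕ} {Λ : KGraph k}

theorem exists_isExtension (μ : Λ.Path) (x : InfPath Λ) (h : Λ.s μ = x.val 0 0) :
    ∃ z, Λ.IsExtension μ x z := by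
  have hμx : ∀ n, Λ.s μ = Λ.r (x.val 0 n) := fun n => by rw [x.r_val, h]
  obtain ⟨z, hz⟩ := InfPath.exists_forall_isPrefix (w := fun n => Λ.comp μ (x.val 0 n))
    (fun n => by rw [Λ.d_comp _ _ (hμx n), x.d_val]; exact le_add_self)
    (fun m n => (x.isPrefix_val_zero m n).comp_left (hμx m))
  refine ⟨z, h, fun n => ?_⟩
  have hμxn : Λ.IsPrefix (Λ.comp μ (x.val 0 n)) (Λ.comp μ (x.val 0 (Λ.d μ + n))) := by
    rw [add_comm]; exact (x.isPrefix_val_zero n _).comp_left (hμx n)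
  exact (hz _).eq_of_d_eq hμxn (by rw [z.d_val, Λ.d_comp _ _ (hμx n), x.d_val])

namespace IsExtension

variable {μ : Λ.Path} {x z : InfPath Λ}

theorem val_zero_d (hz : Λ.IsExtension μ x z) : z.val 0 (Λ.d μ) = μ := by
  have := hz.2 0
  rwa [add_zero, ← hz.1, Λ.comp_id] at this

theorem val_zero_d_of_isPrefix (hz : Λ.IsExtension μ x z) {P : Λ.Path} (hP : Λ.IsPrefix P μ) :
    z.val 0 (Λ.d P) = P :=
  z.val_zero_d_of_isPrefix (hz.val_zero_d ▸ hP)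

theorem val_zero_zero (hz : Λ.IsExtension μ x z) : z.val 0 0 = Λ.r μ := by
  rw [← z.r_val 0 (Λ.d μ), hz.val_zero_d]

theorem unique {z' : InfPath Λ} (hz : Λ.IsExtension μ x z) (hz' : Λ.IsExtension μ x z') :
    z = z' :=
  InfPath.eq_of_val_zero_add (Λ.d μ) fun n => (hz.2 n).trans (hz'.2 n).symm

theorem shift_eq (hz : Λ.IsExtension μ x z) : z.shift (Λ.d μ) = x := by
  refine InfPath.eq_of_val_zero_add 0 fun n => ?_
  rw [zero_add]
  change z.val (0 + Λ.d μ) n = x.val 0 n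
  have hc := z.comp_val 0 (Λ.d μ) n
  rw [hz.val_zero_d, hz.2] at hc
  refine comp_left_cancel ?_ (by rw [x.r_val, hz.1]) hc
  rw [z.r_val, ← z.s_val, hz.val_zero_d]

theorem comp {ν : Λ.Path} {Z : InfPath Λ} (hz : Λ.IsExtension ν x z)
    (hZ : Λ.IsExtension μ z Z) (hμν : Λ.s μ = Λ.r ν) : Λ.IsExtension (Λ.comp μ ν) x Z := by
  refine ⟨by rw [Λ.s_comp _ _ hμν]; exact hz.1, fun n => ?_⟩
  have hνx : Λ.s ν = Λ.r (x.val 0 n) := by rw [x.r_val]; exact hz.1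
  rw [Λ.d_comp _ _ hμν, add_assoc, hZ.2, hz.2, Λ.comp_assoc _ _ _ hμν hνx]

theorem of_comp {C α : Λ.Path} {x Z : InfPath Λ}
    (hZ : Λ.IsExtension (Λ.comp C α) x Z) (hCα : Λ.s C = Λ.r α) :
    Λ.IsExtension α x (Z.shift (Λ.d C)) := by
  obtain ⟨z, hz⟩ := exists_isExtension α x (by rw [← Λ.s_comp _ _ hCα]; exact hZ.1)
  obtain ⟨Z', hZ'⟩ := exists_isExtension C z (by rw [hz.val_zero_zero]; exact hCα)
  rwa [hZ.unique (hz.comp hZ' hCα), hZ'.shift_eq]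

end IsExtension

end KGraph

theorem InfPath.inSub_tailPaths {k : ℕ} {Λ : KGraph k} {T : Set Λ.Path} {x : InfPath Λ}
    (h : ∀ p, Λ.s (x.val 0 p) ∈ T) : x.inSub (Λ.tailPaths T) := fun p n => by
  have := h (p + n)
  rwa [x.s_val, zero_add, ← x.s_val p n] at this

namespace MaximalTail

open KGraph

variable {k : ℕ} {Λ : KGraph k} {T : Set Λ.Path}

theorem s_mem_of_isPrefix (hT : MaximalTail Λ T) {P W : Λ.Path} (h : Λ.IsPrefix P W)
    (hW : Λ.s W ∈ T) : Λ.s P ∈ T := by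
  obtain ⟨R, hPR, rfl⟩ := h
  rw [Λ.s_comp _ _ hPR] at hW
  exact hPR ▸ hT.backward_closed _ (Λ.d_r R) _ hW ⟨R, rfl, rfl⟩

theorem inSub_of_isExtension (hT : MaximalTail Λ T) {γ : Λ.Path} {x z : InfPath Λ}
    (hz : Λ.IsExtension γ x z) (hx : x.inSub (Λ.tailPaths T)) : z.inSub (Λ.tailPaths T) :=
  InfPath.inSub_tailPaths fun p => by
    refine hT.s_mem_of_isPrefix (z.isPrefix_val_zero p (Λ.d γ)) ?_
    rw [add_comm, hz.2, Λ.s_comp _ _ (by rw [x.r_val]; exact hz.1)]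
    exact hx 0 p

theorem exists_infPath (hT : MaximalTail Λ T) {v : Λ.Path} (hv : v ∈ T) :
    ∃ x : InfPath Λ, x.inSub (Λ.tailPaths T) ∧ x.val 0 0 = v := by
  choose! E hEr hEd hEs using fun w hw => hT.reaches w hw 1
  let W : ℕ → Λ.Path := fun j => Nat.rec v (fun _ P => Λ.comp P (E (Λ.s P))) j
  have hW : ∀ j, Λ.s (W j) ∈ T ∧ Λ.r (W j) = v ∧ Λ.d (W j) = j := by
    intro j
    induction j with
    | zero =>
      have hdv := hT.vertex v hv
      exact ⟨(s_eq_self_of_d_eq_zero hdv).symm ▸ hv, r_eq_self_of_d_eq_zero hdv,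
        by rw [Nat.cast_zero]; exact hdv⟩
    | succ j ih =>
      have hWE : Λ.s (W j) = Λ.r (E (Λ.s (W j))) := (hEr _ ih.1).symm
      have hsucc : W (j + 1) = Λ.comp (W j) (E (Λ.s (W j))) := rfl
      rw [hsucc, Λ.s_comp _ _ hWE, Λ.r_comp _ _ hWE, Λ.d_comp _ _ hWE, hEd _ ih.1, ih.2.2]
      exact ⟨hEs _ ih.1, ih.2.1, by push_cast; rfl⟩
  have hmono : ∀ i j, i ≤ j → Λ.IsPrefix (W i) (W j) := fun i j hij => by
    induction j, hij using Nat.le_induction with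
    | base => exact isPrefix_refl _
    | succ j _ ih => exact ih.trans (isPrefix_comp (hEr _ (hW j).1).symm)
  obtain ⟨x, hx⟩ := InfPath.exists_forall_isPrefix (w := fun n => W (Finset.univ.sup n))
    (fun n i => by rw [(hW _).2.2, Pi.natCast_apply]; exact Finset.le_sup (Finset.mem_univ i))
    (fun m n => hmono _ _ (Finset.sup_mono_fun fun i _ => le_self_add))
  refine ⟨x, InfPath.inSub_tailPaths fun p => hT.s_mem_of_isPrefix (hx p) (hW _).1, ?_⟩
  rw [Λ.eq_r_of_d_eq_zero _ (x.d_val 0 0), (hx 0).r_eq, (hW _).2.1]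

end MaximalTail

namespace KGraph

variable {k : ℕ} {Λ : KGraph k}

theorem isCyclinePair_refl {P : Set Λ.Path} {μ : Λ.Path} (hμ : μ ∈ P) :
    Λ.IsCyclinePair P μ μ :=
  ⟨hμ, hμ, rfl, fun _ _ _ hz => hz⟩

namespace IsCyclinePair

variable {P : Set Λ.Path} {μ ν : Λ.Path}

theorem trans {ξ : Λ.Path} (h : Λ.IsCyclinePair P μ ν) (h' : Λ.IsCyclinePair P ν ξ) :
    Λ.IsCyclinePair P μ ξ :=
  ⟨h.1, h'.2.1, h.2.2.1.trans h'.2.2.1, fun x hx z hz => h.2.2.2 x hx z (h'.2.2.2 x hx z hz)⟩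

theorem symm (h : Λ.IsCyclinePair P μ ν) : Λ.IsCyclinePair P ν μ := by
  refine ⟨h.2.1, h.1, h.2.2.1.symm, fun x hx z hz => ?_⟩
  obtain ⟨z', hz'⟩ := exists_isExtension ν x (h.2.2.1 ▸ hz.1)
  rwa [hz.unique (h.2.2.2 x hx z' hz')]

theorem restrict {Q : Set Λ.Path} (h : Λ.IsCyclinePair Q μ ν) (hPQ : P ⊆ Q) (hμ : μ ∈ P)
    (hν : ν ∈ P) : Λ.IsCyclinePair P μ ν :=
  ⟨hμ, hν, h.2.2.1, fun x hx => h.2.2.2 x fun p n => hPQ (hx p n)⟩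

variable {T : Set Λ.Path}

theorem comp_right (hT : MaximalTail Λ T) (h : Λ.IsCyclinePair (Λ.tailPaths T) μ ν)
    {γ : Λ.Path} (hγ : γ ∈ Λ.tailPaths T) (hμγ : Λ.s μ = Λ.r γ) :
    Λ.IsCyclinePair (Λ.tailPaths T) (Λ.comp μ γ) (Λ.comp ν γ) := by
  have hνγ : Λ.s ν = Λ.r γ := h.2.2.1 ▸ hμγ
  refine ⟨?_, ?_, by rw [Λ.s_comp _ _ hμγ, Λ.s_comp _ _ hνγ], fun x hx z hz => ?_⟩
  · exact (Λ.s_comp _ _ hμγ ▸ hγ : Λ.s (Λ.comp μ γ) ∈ T)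
  · exact (Λ.s_comp _ _ hνγ ▸ hγ : Λ.s (Λ.comp ν γ) ∈ T)
  obtain ⟨x', hx'⟩ := exists_isExtension γ x (by rw [← Λ.s_comp _ _ hνγ]; exact hz.1)
  obtain ⟨z', hz'⟩ := exists_isExtension ν x' (by rw [hx'.val_zero_zero]; exact hνγ)
  rw [hz.unique (hx'.comp hz' hνγ)]
  exact hx'.comp (h.2.2.2 x' (hT.inSub_of_isExtension hx' hx) z' hz') hμγ

theorem of_comp_left {C α β : Λ.Path}
    (h : Λ.IsCyclinePair (Λ.tailPaths T) (Λ.comp C α) (Λ.comp C β))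
    (hCα : Λ.s C = Λ.r α) (hCβ : Λ.s C = Λ.r β) : Λ.IsCyclinePair (Λ.tailPaths T) α β := by
  have hs := h.2.2.1
  rw [Λ.s_comp _ _ hCα, Λ.s_comp _ _ hCβ] at hs
  refine ⟨?_, ?_, hs, fun x hx z hz => ?_⟩
  · exact (Λ.s_comp _ _ hCα ▸ h.1 : Λ.s α ∈ T)
  · exact (Λ.s_comp _ _ hCβ ▸ h.2.1 : Λ.s β ∈ T)
  obtain ⟨Z, hZ⟩ := exists_isExtension C z (by rw [hz.val_zero_zero]; exact hCβ)
  rw [← hZ.shift_eq]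
  exact (h.2.2.2 x hx Z (hz.comp hZ hCβ)).of_comp hCα

theorem eq_of_isPrefix (hT : MaximalTail Λ T) (h : Λ.IsCyclinePair (Λ.tailPaths T) μ ν)
    {P Q : Λ.Path} (hP : Λ.IsPrefix P μ) (hQ : Λ.IsPrefix Q ν) (hd : Λ.d P = Λ.d Q) :
    P = Q := by
  obtain ⟨x, hx, hx0⟩ := hT.exists_infPath h.2.1
  obtain ⟨z, hz⟩ := exists_isExtension ν x hx0.symm
  rw [← (h.2.2.2 x hx z hz).val_zero_d_of_isPrefix hP, ← hz.val_zero_d_of_isPrefix hQ, hd]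

theorem eq_of_d_eq (hT : MaximalTail Λ T) (h : Λ.IsCyclinePair (Λ.tailPaths T) μ ν)
    (hd : Λ.d μ = Λ.d ν) : μ = ν :=
  h.eq_of_isPrefix hT (isPrefix_refl μ) (isPrefix_refl ν) hd

theorem right_unique (hT : MaximalTail Λ T) {ν' : Λ.Path}
    (h : Λ.IsCyclinePair (Λ.tailPaths T) μ ν) (h' : Λ.IsCyclinePair (Λ.tailPaths T) μ ν')
    (hd : Λ.d ν = Λ.d ν') : ν = ν' :=
  (h.symm.trans h').eq_of_d_eq hT hd

theorem exists_eq_comp (hT : MaximalTail Λ T) {C α ξ : Λ.Path}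
    (h : Λ.IsCyclinePair (Λ.tailPaths T) (Λ.comp C α) ξ) (hCα : Λ.s C = Λ.r α)
    {b : Fin k → ℕ} (hξ : Λ.d ξ = Λ.d C + b) :
    ∃ β, Λ.s C = Λ.r β ∧ ξ = Λ.comp C β ∧ Λ.d β = b ∧
      Λ.IsCyclinePair (Λ.tailPaths T) α β := by
  obtain ⟨⟨C', β⟩, ⟨hC'β, hdC', hdβ, rfl⟩, -⟩ := Λ.factor ξ (Λ.d C) b hξ
  obtain rfl : C = C' := h.eq_of_isPrefix hT (isPrefix_comp hCα) (isPrefix_comp hC'β) hdC'.symm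
  exact ⟨β, hC'β, rfl, hdβ, h.of_comp_left hCα hC'β⟩

/-- The partner has degree `b = d α - (d F - d G)`, stated without truncated subtraction. -/
theorem exists_partner (hT : MaximalTail Λ T) {F G α : Λ.Path}
    (h : Λ.IsCyclinePair (Λ.tailPaths T) F G) (hα : α ∈ Λ.tailPaths T)
    (hFα : Λ.s F = Λ.r α) {b : Fin k → ℕ} (hb : Λ.d G + Λ.d α = Λ.d F + b) :
    ∃ β, Λ.r β = Λ.r α ∧ Λ.d β = b ∧ Λ.IsCyclinePair (Λ.tailPaths T) α β := by
  have hGα : Λ.s G = Λ.r α := h.2.2.1 ▸ hFα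
  obtain ⟨β, hFβ, -, hdβ, hαβ⟩ := (h.comp_right hT hα hFα).exists_eq_comp hT hFα
    (by rw [Λ.d_comp _ _ hGα, hb])
  exact ⟨β, hFβ ▸ hFα, hdβ, hαβ⟩

end IsCyclinePair

variable {T : Set Λ.Path}

variable (Λ) in
def IsPeriodAt (T : Set Λ.Path) (v : Λ.Path) (m : Fin k → ℤ) : Prop :=
  ∃ F G, Λ.IsCyclinePair (Λ.tailPaths T) F G ∧ Λ.s F = v ∧
    m = fun i => (Λ.d F i : ℤ) - Λ.d G i

theorem IsPeriodAt.s_of_r (hT : MaximalTail Λ T) {γ : Λ.Path} {m : Fin k → ℤ}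
    (h : Λ.IsPeriodAt T (Λ.r γ) m) (hγ : Λ.s γ ∈ T) : Λ.IsPeriodAt T (Λ.s γ) m := by
  obtain ⟨F, G, hFG, hFγ, rfl⟩ := h
  have hGγ : Λ.s G = Λ.r γ := hFG.2.2.1 ▸ hFγ
  refine ⟨_, _, hFG.comp_right hT hγ hFγ, Λ.s_comp _ _ hFγ, ?_⟩
  funext i
  rw [Λ.d_comp _ _ hFγ, Λ.d_comp _ _ hGγ, Pi.add_apply, Pi.add_apply]
  push_cast
  ring

theorem exists_isPeriodAt (hT : MaximalTail Λ T) {M : Set (Fin k → ℤ)} (hM : M.Finite)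
    (hMP : M ⊆ Λ.PerPair (Λ.tailPaths T)) : ∃ v ∈ T, ∀ m ∈ M, Λ.IsPeriodAt T v m := by
  induction M, hM using Set.Finite.induction_on with
  | empty =>
    obtain ⟨v, hv⟩ := hT.nonempty
    exact ⟨v, hv, fun m hm => hm.elim⟩
  | @insert a M _ _ ih =>
    obtain ⟨v, hv, hvM⟩ := ih ((Set.subset_insert a M).trans hMP)
    obtain ⟨μ, ν, hμν, rfl⟩ := hMP (Set.mem_insert _ _)
    obtain ⟨w, hw, ⟨γ, hγr, hγs⟩, ⟨δ, hδr, hδs⟩⟩ := hT.directed _ hμν.1 v hv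
    refine ⟨w, hw, Set.forall_mem_insert.2 ⟨?_, fun m hm => ?_⟩⟩
    · exact hγs ▸ IsPeriodAt.s_of_r hT (hγr ▸ ⟨μ, ν, hμν, rfl, rfl⟩) (hγs ▸ hw)
    · exact hδs ▸ IsPeriodAt.s_of_r hT (hδr ▸ hvM m hm) (hδs ▸ hw)

theorem zero_mem_perPair (hT : MaximalTail Λ T) : 0 ∈ Λ.PerPair (Λ.tailPaths T) := by
  obtain ⟨v, hv⟩ := hT.nonempty
  have hvT : v ∈ Λ.tailPaths T := show Λ.s v ∈ T by
    rwa [s_eq_self_of_d_eq_zero (hT.vertex v hv)]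
  exact ⟨v, v, isCyclinePair_refl hvT, funext fun i => (sub_self _).symm⟩

theorem neg_mem_perPair {m : Fin k → ℤ} (hm : m ∈ Λ.PerPair (Λ.tailPaths T)) :
    -m ∈ Λ.PerPair (Λ.tailPaths T) := by
  obtain ⟨μ, ν, h, rfl⟩ := hm
  exact ⟨ν, μ, h.symm, by funext i; simp⟩

theorem add_mem_perPair (hT : MaximalTail Λ T) {m₁ m₂ : Fin k → ℤ}
    (hm₁ : m₁ ∈ Λ.PerPair (Λ.tailPaths T)) (hm₂ : m₂ ∈ Λ.PerPair (Λ.tailPaths T)) :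
    m₁ + m₂ ∈ Λ.PerPair (Λ.tailPaths T) := by
  obtain ⟨v, hv, hper⟩ := exists_isPeriodAt hT (Set.toFinite {m₁, m₂})
    (Set.insert_subset hm₁ (Set.singleton_subset_iff.2 hm₂))
  obtain ⟨F₁, G₁, h₁, hF₁, rfl⟩ := hper m₁ (Set.mem_insert _ _)
  obtain ⟨F₂, G₂, h₂, hF₂, rfl⟩ := hper m₂ (Set.mem_insert_of_mem _ rfl)
  obtain ⟨α, hαr, hαd, hαT⟩ := hT.reaches v hv (Λ.d F₁ + Λ.d F₂)
  obtain ⟨β₁, hβ₁r, hβ₁d, hαβ₁⟩ := h₁.exists_partner hT hαT (hF₁.trans hαr.symm)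
    (b := Λ.d G₁ + Λ.d F₂) (by rw [hαd]; abel)
  obtain ⟨β₂, -, hβ₂d, hβ₁β₂⟩ := h₂.exists_partner hT hαβ₁.2.1
    (hF₂.trans (hβ₁r.trans hαr).symm) (b := Λ.d G₁ + Λ.d G₂) (by rw [hβ₁d]; abel)
  refine ⟨α, β₂, hαβ₁.trans hβ₁β₂, ?_⟩
  funext i
  simp only [hαd, hβ₂d, Pi.add_apply]
  push_cast
  ring

variable (Λ) in
def perSubgroup (hT : MaximalTail Λ T) : AddSubgroup (Fin k → ℤ) where
  carrier := Λ.PerPair (Λ.tailPaths T)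
  zero_mem' := zero_mem_perPair hT
  add_mem' := add_mem_perPair hT
  neg_mem' := neg_mem_perPair

theorem mem_HSet (hT : MaximalTail Λ T) {v : Λ.Path} (hv : v ∈ T)
    (h : ∀ p q : Fin k → ℕ, (fun i => (p i : ℤ) - (q i : ℤ)) ∈ Λ.PerPair (Λ.tailPaths T) →
      ∀ μ, Λ.r μ = v → Λ.d μ = p → Λ.s μ ∈ T →
        ∃ ν, Λ.r ν = v ∧ Λ.d ν = q ∧ Λ.IsCyclinePair (Λ.tailPaths T) μ ν) :
    v ∈ Λ.HSet T :=
  ⟨hv, fun p q hpq μ hμv hμp hμT =>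
    let ⟨ν, hν⟩ := h p q hpq μ hμv hμp hμT
    ⟨ν, hν, fun _ hν' => hν'.2.2.right_unique hT hν.2.2 (hν'.2.1.trans hν.2.1.symm)⟩⟩

theorem s_mem_HSet (hT : MaximalTail Λ T) {l : Λ.Path} (hl : Λ.r l ∈ Λ.HSet T)
    (hsl : Λ.s l ∈ T) : Λ.s l ∈ Λ.HSet T := by
  refine mem_HSet hT hsl fun p q hpq μ hμl hμp hμT => ?_
  have hlμ : Λ.s l = Λ.r μ := hμl.symm
  have hpq' : (fun i => ((Λ.d l + p) i : ℤ) - ((Λ.d l + q) i : ℤ)) =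
      fun i => (p i : ℤ) - (q i : ℤ) := by
    funext i; simp only [Pi.add_apply]; push_cast; ring
  obtain ⟨ν', ⟨hν'r, hν'd, hlμν'⟩, -⟩ := hl.2 _ _ (hpq'.symm ▸ hpq) (Λ.comp l μ)
    (Λ.r_comp _ _ hlμ) (by rw [Λ.d_comp _ _ hlμ, hμp]) (by rwa [Λ.s_comp _ _ hlμ])
  obtain ⟨ν, hlν, -, hνq, hμν⟩ := hlμν'.exists_eq_comp hT hlμ hν'd
  exact ⟨ν, hlν.symm, hνq, hμν⟩

/-- Induction along the well-founded strict orthant order: peeling off a period `s` realised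
at `v` with `OrthantLE s m` leaves the strictly smaller period `m - s`. -/
theorem exists_partner_of_forall_isPeriodAt (hT : MaximalTail Λ T) {v : Λ.Path}
    (hv : ∀ m ∈ Λ.PerPair (Λ.tailPaths T), m ≠ 0 →
      ∃ s ≠ 0, OrthantLE s m ∧ Λ.IsPeriodAt T v s)
    (m : Fin k → ℤ) (hm : m ∈ Λ.PerPair (Λ.tailPaths T)) {μ : Λ.Path}
    (hμ : μ ∈ Λ.tailPaths T) (hμv : Λ.r μ = v) {q : Fin k → ℕ}
    (hq : m = fun i => (Λ.d μ i : ℤ) - q i) :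
    ∃ ν, Λ.r ν = v ∧ Λ.d ν = q ∧ Λ.IsCyclinePair (Λ.tailPaths T) μ ν := by
  induction m using (wellQuasiOrdered_orthantLE (ι := Fin k)).wellFounded.induction
    generalizing μ with
  | h m ih =>
  by_cases hm0 : m = 0
  · refine ⟨μ, hμv, funext fun i => ?_, isCyclinePair_refl hμ⟩
    have := congrFun (hq.symm.trans hm0) i
    simp only [Pi.zero_apply] at this
    omega
  obtain ⟨s, hs0, hsm, F, G, hFG, hFv, rfl⟩ := hv m hm hm0
  have hb : ∀ i, (0 : ℤ) ≤ Λ.d μ i - (Λ.d F i - Λ.d G i) := fun i => by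
    have h1 := hsm i
    have h2 := congrFun hq i
    rw [Set.mem_uIcc] at h1
    simp only at h1 h2
    omega
  obtain ⟨β, hβr, hβd, hμβ⟩ := hFG.exists_partner hT hμ (hFv.trans hμv.symm)
    (b := fun i => ((Λ.d μ i : ℤ) - (Λ.d F i - Λ.d G i)).toNat) (funext fun i => by
      have := hb i
      simp only [Pi.add_apply]
      omega)
  have hlt : OrthantLE (m - _) m ∧ ¬OrthantLE m (m - _) :=
    ⟨hsm.sub, fun h => hs0 (sub_eq_self.mp (antisymm hsm.sub h))⟩
  have hq' : (m - fun i => (Λ.d F i : ℤ) - Λ.d G i) = fun i => (Λ.d β i : ℤ) - q i := by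
    funext i
    have := congrFun hq i
    simp only [hβd, Pi.sub_apply, Int.toNat_of_nonneg (hb i)] at this ⊢
    omega
  obtain ⟨ν, hνr, hνd, hβν⟩ := ih _ hlt ((perSubgroup Λ hT).sub_mem hm ⟨F, G, hFG, rfl⟩)
    hμβ.2.1 (hβr.trans hμv) hq'
  exact ⟨ν, hνr, hνd, hμβ.trans hβν⟩

theorem HSet_nonempty (hT : MaximalTail Λ T) : (Λ.HSet T).Nonempty := by
  obtain ⟨B, hB, hBfin, hBmin⟩ := wellQuasiOrdered_orthantLE.exists_finite_subset_forall_exists_rel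
    (Λ.PerPair (Λ.tailPaths T) \ {0})
  obtain ⟨v, hv, hvB⟩ := exists_isPeriodAt hT hBfin (hB.trans Set.sdiff_subset)
  refine ⟨v, mem_HSet hT hv fun p q hpq μ hμv hμp hμT => ?_⟩
  refine exists_partner_of_forall_isPeriodAt hT (fun m hm hm0 => ?_) _ hpq hμT hμv
    (by rw [hμp])
  obtain ⟨s, hsB, hsm⟩ := hBmin m ⟨hm, hm0⟩
  exact ⟨s, (hB hsB).2, hsm, hvB s hsB⟩

theorem inSub_cornerPaths (hT : MaximalTail Λ T) {x : InfPath Λ}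
    (hx : x.inSub (Λ.tailPaths T)) (hx0 : x.val 0 0 ∈ Λ.HSet T) :
    x.inSub (Λ.cornerPaths T (Λ.HSet T)) := fun p n => by
  refine ⟨hx p n, ?_⟩
  have := s_mem_HSet hT ((x.r_val 0 p).symm ▸ hx0) (hx 0 p)
  rwa [x.s_val, zero_add, ← x.r_val p n] at this

theorem IsCyclinePair.of_cornerPaths (hT : MaximalTail Λ T) {μ ν : Λ.Path}
    (h : Λ.IsCyclinePair (Λ.cornerPaths T (Λ.HSet T)) μ ν) :
    Λ.IsCyclinePair (Λ.tailPaths T) μ ν :=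
  ⟨h.1.1, h.2.1.1, h.2.2.1, fun x hx z hz => h.2.2.2 x (inSub_cornerPaths hT hx
    (hz.1 ▸ s_mem_HSet hT h.2.1.2 h.2.1.1)) z hz⟩

theorem perPair_cornerPaths (hT : MaximalTail Λ T) :
    Λ.PerPair (Λ.cornerPaths T (Λ.HSet T)) = Λ.PerPair (Λ.tailPaths T) := by
  ext m
  refine ⟨fun ⟨μ, ν, h, hm⟩ => ⟨μ, ν, h.of_cornerPaths hT, hm⟩, fun ⟨μ, ν, h, hm⟩ => ?_⟩
  obtain ⟨v, hvH⟩ := HSet_nonempty hT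
  obtain ⟨μ', hμ'v, hμ'd, hμ'T⟩ := hT.reaches v hvH.1 (Λ.d μ)
  obtain ⟨ν', ⟨hν'v, hν'd, h'⟩, -⟩ := hvH.2 _ _ ⟨μ, ν, h, rfl⟩ μ' hμ'v hμ'd hμ'T
  refine ⟨μ', ν', h'.restrict (fun _ hξ => hξ.1) ⟨hμ'T, hμ'v ▸ hvH⟩ ⟨h'.2.1, hν'v ▸ hvH⟩, ?_⟩
  rw [hm, hμ'd, hν'd]

end KGraph

namespace SelfSimilarSys

open KGraph

variable {k : ℕ} {G : Type} [Group G] [Countable G] {Λ : KGraph k} (S : SelfSimilarSys k G Λ)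
  {P : Set Λ.Path} {μ ν : Λ.Path}

theorem isCyclineTriple_one_iff :
    S.IsCyclineTriple P μ 1 ν ↔ Λ.IsCyclinePair P μ ν := by
  refine ⟨fun h => ⟨h.1, h.2.1, by rw [h.2.2.1, S.act_one], fun x hx z hz =>
    h.2.2.2 x hx hz.1 x (fun n => (S.act_one _).symm) z hz⟩, fun h => ⟨h.1, h.2.1,
    by rw [S.act_one]; exact h.2.2.1, fun x hx _ y hy z hz => ?_⟩⟩
  obtain rfl : y = x := InfPath.eq_of_val_zero_add 0 fun n => by rw [hy, S.act_one]
  exact h.2.2.2 y hx z hz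

theorem perTriple_eq_perPair (h : ∀ μ g ν, S.IsCyclineTriple P μ g ν → g = 1) :
    S.PerTriple P = Λ.PerPair P := by
  ext m
  refine ⟨fun ⟨μ, g, ν, hμν, hm⟩ => ?_, fun ⟨μ, ν, hμν, hm⟩ =>
    ⟨μ, 1, ν, (S.isCyclineTriple_one_iff).2 hμν, hm⟩⟩
  obtain rfl := h μ g ν hμν
  exact ⟨μ, ν, (S.isCyclineTriple_one_iff).1 hμν, hm⟩

theorem IsCyclineTriple.of_cornerPaths {T : Set Λ.Path} (hT : MaximalTail Λ T) {g : G}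
    (h : S.IsCyclineTriple (Λ.cornerPaths T (Λ.HSet T)) μ g ν) :
    S.IsCyclineTriple (Λ.tailPaths T) μ g ν :=
  ⟨h.1.1, h.2.1.1, h.2.2.1, fun x hx hx0 => h.2.2.2 x (inSub_cornerPaths hT hx
    (hx0 ▸ s_mem_HSet hT h.2.1.2 h.2.1.1)) hx0⟩

end SelfSimilarSys

theorem per_sets_eq_and_subgroup_general
    {k : ℕ} (G : Type) [Group G] [Countable G] (Λ : KGraph k)
    (S : SelfSimilarSys k G Λ)
    (T : Set Λ.Path) (hT : MaximalTail Λ T)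
    (hcyc : ∀ μ g ν, S.IsCyclineTriple (Λ.tailPaths T) μ g ν → g = 1) :
    S.PerTriple (Λ.cornerPaths T (Λ.HSet T)) =
      Λ.PerPair (Λ.cornerPaths T (Λ.HSet T)) ∧
    Λ.PerPair (Λ.cornerPaths T (Λ.HSet T)) = S.PerTriple (Λ.tailPaths T) ∧
    S.PerTriple (Λ.tailPaths T) = Λ.PerPair (Λ.tailPaths T) ∧
    ∃ A : AddSubgroup (Fin k → ℤ),
      (A : Set (Fin k → ℤ)) = Λ.PerPair (Λ.tailPaths T) := by
  have htail := S.perTriple_eq_perPair hcyc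
  have hcorner := S.perTriple_eq_perPair fun μ g ν h => hcyc μ g ν (h.of_cornerPaths S hT)
  exact ⟨hcorner, by rw [KGraph.perPair_cornerPaths hT, htail], htail,
    KGraph.perSubgroup Λ hT, rfl⟩

/-- For a pseudo free self-similar `k`-graph `(G, Λ)` with `g · v = v` for
all vertices `v`, and a maximal tail `T` of `Λ`: if every cycline triple of
`(G, ΛT)` is a cycline pair, then
`Per_{G, H_T ΛT} = Per_{H_T ΛT} = Per_{G, ΛT} = Per_{ΛT}` and this common
set is a subgroup of `ℤ^k`. -/
theorem per_sets_eq_and_subgroup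
    {k : ℕ} (G : Type) [Group G] [Countable G] (Λ : KGraph k)
    (hRF : Λ.RowFinite) (hSF : Λ.SourceFree)
    (S : SelfSimilarSys k G Λ) (hPF : S.PseudoFree)
    (hfix : ∀ g v, Λ.IsVertex v → S.act g v = v)
    (T : Set Λ.Path) (hT : MaximalTail Λ T)
    (hcyc : ∀ μ g ν, S.IsCyclineTriple (Λ.tailPaths T) μ g ν → g = 1) :
    S.PerTriple (Λ.cornerPaths T (Λ.HSet T)) =
      Λ.PerPair (Λ.cornerPaths T (Λ.HSet T)) ∧
    Λ.PerPair (Λ.cornerPaths T (Λ.HSet T)) = S.PerTriple (Λ.tailPaths T) ∧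
    S.PerTriple (Λ.tailPaths T) = Λ.PerPair (Λ.tailPaths T) ∧
    ∃ A : AddSubgroup (Fin k → ℤ),
      (A : Set (Fin k → ℤ)) = Λ.PerPair (Λ.tailPaths T) :=
  per_sets_eq_and_subgroup_general G Λ S T hT hcyc
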